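/- For all integers n \ge 2, p_{n-2} q_n - p_n q_{n-2} = 2n \, \mathfrak{d}_{n-1} + \frac{n-2}{n} q_{n-2}, where \mathfrak{d}_m = p_{m-1} q_m - p_m q_{m-1}, q_n = \sum_{k=0}^n \binom{n}{k}^2 k!, and p_n = \sum_{k=0}^n \binom{n}{k}^2 k! (2 H_{n-k} - H_k). -/

import Mathlib

open Finset

noncomputable def H (m : ℕ) : ℚ := ∑ j ∈ Finset.range m, (1 : ℚ) / (j + 1)

noncomputable def q (n : ℕ) : ℚ :=
  ∑ k ∈ Finset.range (n + 1), ((n.choose k : ℚ))^2 * (Nat.factorial k : ℚ)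

noncomputable def p (n : ℕ) : ℚ :=
  ∑ k ∈ Finset.range (n + 1),
    ((n.choose k : ℚ))^2 * (Nat.factorial k : ℚ) * (2 * H (n - k) - H k)

/-- `dd n = p_{n-1} q_n - p_n q_{n-1}`, with the conventions `p_{-1} = 1`, `q_{-1} = 0`,
so `dd 0 = 1`. -/
noncomputable def dd : ℕ → ℚ
  | 0 => 1
  | (n + 1) => p n * q (n + 1) - p (n + 1) * q n

/-! Reflecting `k ↦ n - k`, `q n = ∑ⱼ t(n, j)` with `t(n, j) = n!² / (j!² (n - j)!)`, and `p n` is the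
same sum weighted by `2 H j - H (n - j)`. Both recurrences follow by creative telescoping: for
`j ≤ n` the three-term combination of the summands is `G (j + 1) - G j` for a certificate `G` that is a
rational multiple of `t(n + 2, j)` (and, for `p`, of its weighted version). Only the boundary terms
`j = n + 1, n + 2` survive; for `p` they leave the inhomogeneity `-n / (n + 2)`, because `H (n - j)`
has no meaning there. The cross identity is then `p n` times the recurrence of `q` minus `q n` times
that of `p`. -/

open Nat

theorem sum_recurrence_of_telescoping {R : Type*} [CommRing R] (a : ℕ → ℕ → R) (G : ℕ → R)
    (x y : R) (n : ℕ)
    (h : ∀ j ≤ n, a (n + 2) j - x * a (n + 1) j + y * a n j = G (j + 1) - G j) :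
    ∑ j ∈ range (n + 3), a (n + 2) j - x * ∑ j ∈ range (n + 2), a (n + 1) j
        + y * ∑ j ∈ range (n + 1), a n j
      = G (n + 1) - G 0 + a (n + 2) (n + 1) + a (n + 2) (n + 2) - x * a (n + 1) (n + 1) := by
  have hsum : ∑ j ∈ range (n + 1), (a (n + 2) j - x * a (n + 1) j + y * a n j)
      = G (n + 1) - G 0 := by
    rw [← sum_range_sub]
    exact sum_congr rfl fun j hj => h j (Nat.lt_succ_iff.mp (mem_range.mp hj))
  rw [← hsum, sum_add_distrib, sum_sub_distrib, ← mul_sum, ← mul_sum]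
  simp only [sum_range_succ _ (n + 1), sum_range_succ _ (n + 2)]
  ring

lemma H_zero : H 0 = 0 := by
  simp [H]

lemma H_succ (m : ℕ) : H (m + 1) = H m + 1 / (m + 1) := by
  simp [H, sum_range_succ]

noncomputable def qTerm (n j : ℕ) : ℚ := (n.choose j : ℚ) ^ 2 * (n - j)!

noncomputable def pTerm (n j : ℕ) : ℚ := qTerm n j * (2 * H j - H (n - j))

lemma q_eq_sum_qTerm (n : ℕ) : q n = ∑ j ∈ range (n + 1), qTerm n j := by
  rw [q, ← sum_range_reflect]
  refine sum_congr rfl fun j hj => ?_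
  have hj : j ≤ n := Nat.lt_succ_iff.mp (mem_range.mp hj)
  rw [qTerm, add_tsub_cancel_right, Nat.choose_symm hj]

lemma qTerm_of_eq_add {n j d : ℕ} (h : n = j + d) :
    qTerm n j = (n ! : ℚ) ^ 2 / ((j ! : ℚ) ^ 2 * d !) := by
  subst h
  rw [qTerm, Nat.cast_choose ℚ (Nat.le_add_right j d), Nat.add_sub_cancel_left]
  field_simp

lemma p_eq_sum_pTerm (n : ℕ) : p n = ∑ j ∈ range (n + 1), pTerm n j := by
  rw [p, ← sum_range_reflect]
  refine sum_congr rfl fun j hj => ?_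
  have hj : j ≤ n := Nat.lt_succ_iff.mp (mem_range.mp hj)
  rw [pTerm, qTerm, add_tsub_cancel_right, Nat.choose_symm hj, Nat.sub_sub_self hj]

noncomputable def qCert (n j : ℕ) : ℚ := -(j : ℚ) ^ 2 / ((n : ℚ) + 2) ^ 2 * qTerm (n + 2) j

noncomputable def pCert (n j : ℕ) : ℚ :=
  (2 * j * qTerm (n + 2) j - (j : ℚ) ^ 2 * pTerm (n + 2) j) / ((n : ℚ) + 2) ^ 2

lemma qCert_succ_sub (n j : ℕ) (hj : j ≤ n) :
    qTerm (n + 2) j - 2 * ((n : ℚ) + 2) * qTerm (n + 1) j + ((n : ℚ) + 1) ^ 2 * qTerm n j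
      = qCert n (j + 1) - qCert n j := by
  obtain ⟨d, rfl⟩ := Nat.exists_eq_add_of_le hj
  rw [qCert, qCert, qTerm_of_eq_add (n := j + d) rfl,
    qTerm_of_eq_add (n := j + d + 1) (d := d + 1) rfl,
    qTerm_of_eq_add (n := j + d + 2) (d := d + 2) rfl,
    qTerm_of_eq_add (n := j + d + 2) (j := j + 1) (d := d + 1) (by ring)]
  simp only [Nat.factorial_succ]
  push_cast
  field_simp
  ring

lemma pCert_succ_sub (n j : ℕ) (hj : j ≤ n) :
    pTerm (n + 2) j - 2 * ((n : ℚ) + 2) * pTerm (n + 1) j + ((n : ℚ) + 1) ^ 2 * pTerm n j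
      = pCert n (j + 1) - pCert n j := by
  obtain ⟨d, rfl⟩ := Nat.exists_eq_add_of_le hj
  simp only [pCert, pTerm, show j + d + 2 - j = d + 1 + 1 by omega,
    show j + d + 1 - j = d + 1 by omega, show j + d + 2 - (j + 1) = d + 1 by omega,
    Nat.add_sub_cancel_left, H_succ]
  rw [qTerm_of_eq_add (n := j + d) rfl,
    qTerm_of_eq_add (n := j + d + 1) (d := d + 1) rfl,
    qTerm_of_eq_add (n := j + d + 2) (d := d + 2) rfl,
    qTerm_of_eq_add (n := j + d + 2) (j := j + 1) (d := d + 1) (by ring)]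
  simp only [Nat.factorial_succ]
  push_cast
  field_simp
  ring

lemma qTerm_self (n : ℕ) : qTerm n n = 1 := by
  simp [qTerm]

lemma qTerm_succ_self (n : ℕ) : qTerm (n + 1) n = ((n : ℚ) + 1) ^ 2 := by
  simp [qTerm]

lemma q_recurrence (n : ℕ) :
    q (n + 2) - 2 * ((n : ℚ) + 2) * q (n + 1) + ((n : ℚ) + 1) ^ 2 * q n = 0 := by
  have h := sum_recurrence_of_telescoping qTerm (qCert n) _ _ n (qCert_succ_sub n)
  simp only [← q_eq_sum_qTerm] at h
  rw [h, qCert, qCert, qTerm_self, qTerm_self, qTerm_succ_self]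
  push_cast
  field_simp
  ring

lemma p_recurrence (n : ℕ) :
    p (n + 2) - 2 * ((n : ℚ) + 2) * p (n + 1) + ((n : ℚ) + 1) ^ 2 * p n = -n / (n + 2) := by
  have h := sum_recurrence_of_telescoping pTerm (pCert n) _ _ n (pCert_succ_sub n)
  simp only [← p_eq_sum_pTerm] at h
  rw [h, pCert, pCert]
  simp only [pTerm, qTerm_self, qTerm_succ_self, Nat.sub_self, show n + 2 - (n + 1) = 0 + 1 by omega,
    H_succ, H_zero]
  push_cast
  field_simp
  ring

theorem pq_cross_identity (n : ℕ) (hn : 2 ≤ n) :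
    p (n - 2) * q n - p n * q (n - 2)
      = 2 * (n : ℚ) * dd (n - 1) + ((n : ℚ) - 2) / (n : ℚ) * q (n - 2) := by
  obtain ⟨m, rfl⟩ := Nat.exists_eq_add_of_le' hn
  simp only [Nat.add_sub_cancel, dd]
  linear_combination (norm := skip) p m * q_recurrence m - q m * p_recurrence m
  push_cast
  field_simp
  ring
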